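/- Let d ≥ 1, let w : Fin d → ℝ, let p_w k = exp (w k) / ∑_j exp (w j) be the softmax distribution, and suppose there exists δ > 0 with p_w k ≥ δ for every k. Then for every u : Fin d → ℝ, the Hessian quadratic form of Φ(w) = log (∑_k exp (w k)) at w in direction u satisfies (∑_k p_w k * (u k)²) − (∑_k p_w k * u k)² ≥ δ * ∑_k (u k − ū)², where ū = (∑_k u k) / d is the arithmetic mean of u. -/

import Mathlib

/-!
The softmax variance of `u` is `∑ k, p k * (u k - m) ^ 2` with `m` the softmax mean of `u`.
Bounding each weight below by `δ` leaves `δ * ∑ k, (u k - m) ^ 2`, and the arithmetic mean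
minimises the sum of squared deviations, so `m` may be replaced by `ū`.
-/

open Real Finset

section

variable {ι : Type*} [Fintype ι]

theorem sum_mul_sub_sq_eq_of_sum_eq_one {p : ι → ℝ} (hp : ∑ k, p k = 1) (u : ι → ℝ) :
    ∑ k, p k * (u k - ∑ j, p j * u j) ^ 2 = ∑ k, p k * u k ^ 2 - (∑ k, p k * u k) ^ 2 := by
  set m := ∑ j, p j * u j
  have expand : ∀ k, p k * (u k - m) ^ 2 = p k * u k ^ 2 - 2 * m * (p k * u k) + m ^ 2 * p k :=
    fun k => by ring
  simp only [expand, sum_add_distrib, sum_sub_distrib, ← mul_sum, hp]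
  ring

theorem sum_sub_mean_sq_le [Nonempty ι] (u : ι → ℝ) (c : ℝ) :
    ∑ k, (u k - (∑ j, u j) / Fintype.card ι) ^ 2 ≤ ∑ k, (u k - c) ^ 2 := by
  set n : ℝ := (Fintype.card ι : ℝ)
  set ub := (∑ j, u j) / n
  have hn : 0 < n := by positivity
  have hsum : ∑ j, u j = n * ub := (mul_div_cancel₀ _ hn.ne').symm
  have expand : ∀ k,
      (u k - c) ^ 2 = (u k - ub) ^ 2 + ((ub - c) * (2 * u k) - (ub - c) * (ub + c)) :=
    fun k => by ring
  have shift : ∑ k, (u k - c) ^ 2 = ∑ k, (u k - ub) ^ 2 + n * (ub - c) ^ 2 := by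
    simp only [expand, sum_add_distrib, sum_sub_distrib, ← mul_sum, sum_const, card_univ,
      nsmul_eq_mul, hsum]
    ring
  rw [shift]
  exact le_add_of_nonneg_right (by positivity)

theorem mul_sum_sub_mean_sq_le_of_le_weights [Nonempty ι] {p : ι → ℝ} {δ : ℝ}
    (hδ : 0 ≤ δ) (hδp : ∀ k, δ ≤ p k) (hp : ∑ k, p k = 1) (u : ι → ℝ) :
    δ * ∑ k, (u k - (∑ j, u j) / Fintype.card ι) ^ 2 ≤
      ∑ k, p k * u k ^ 2 - (∑ k, p k * u k) ^ 2 := by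
  set m := ∑ j, p j * u j
  calc δ * ∑ k, (u k - (∑ j, u j) / Fintype.card ι) ^ 2
      ≤ δ * ∑ k, (u k - m) ^ 2 := mul_le_mul_of_nonneg_left (sum_sub_mean_sq_le u m) hδ
    _ = ∑ k, δ * (u k - m) ^ 2 := mul_sum _ _ _
    _ ≤ ∑ k, p k * (u k - m) ^ 2 := by gcongr with k; exact hδp k
    _ = ∑ k, p k * u k ^ 2 - m ^ 2 := sum_mul_sub_sq_eq_of_sum_eq_one hp u

noncomputable def softmax (w : ι → ℝ) (k : ι) : ℝ :=
  exp (w k) / ∑ j, exp (w j)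

theorem sum_softmax [Nonempty ι] (w : ι → ℝ) : ∑ k, softmax w k = 1 := by
  have hpos : 0 < ∑ j, exp (w j) := sum_pos (fun j _ => exp_pos (w j)) univ_nonempty
  simp only [softmax, ← sum_div, div_self hpos.ne']

end

/-- Strong-convexity lower bound for the log-partition function: if every softmax
probability `p_w k = exp (w k) / ∑ j, exp (w j)` is at least `δ > 0`, then the
Hessian quadratic form of `Φ w = log ∑ k, exp (w k)` in direction `u`, i.e. the
softmax variance of `u`, is at least `δ * ∑ k, (u k - ū)^2` where `ū` is the
arithmetic mean of `u`. -/
theorem logSumExp_strong_convexity (d : ℕ) (hd : 1 ≤ d)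
    (w : Fin d → ℝ) (δ : ℝ) (hδ : 0 < δ)
    (hp : ∀ k, δ ≤ Real.exp (w k) / ∑ j, Real.exp (w j))
    (u : Fin d → ℝ) :
    δ * ∑ k, (u k - (∑ j, u j) / d) ^ 2 ≤
      (∑ k, (Real.exp (w k) / ∑ j, Real.exp (w j)) * (u k) ^ 2)
        - (∑ k, (Real.exp (w k) / ∑ j, Real.exp (w j)) * u k) ^ 2 := by
  have : Nonempty (Fin d) := ⟨⟨0, hd⟩⟩
  simpa only [Fintype.card_fin] using
    mul_sum_sub_mean_sq_le_of_le_weights hδ.le hp (sum_softmax w) u
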